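/- In a deterministic labeled MDP, a policy over the TL-MDP π_Ψ(a | s, φ_t) depending only on the current state and current progressed formula achieves the same return for the non-Markovian reward as any history-dependent policy π_e(a | s₀...s_t, φ); i.e., the optimal expected discounted return over history-dependent policies for the non-Markovian task reward equals the optimal expected discounted return over Markovian policies on the TL-MDP. -/
import Mathlib


inductive LTL (P : Type) : Type
  | tt : LTL P
  | atom : P → LTL P
  | neg : LTL P → LTL P
  | conj : LTL P → LTL P → LTL P
  | disj : LTL P → LTL P → LTL P
  | next : LTL P → LTL P
  | until_ : LTL P → LTL P → LTL P
  deriving DecidableEq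

namespace LTL
variable {P : Type}

/-- The Boolean constant False, encoded as ¬⊤. -/
def ff : LTL P := neg tt

/-- Standard LTL semantics: `sat σ i φ` means ⟨σ, i⟩ ⊨ φ. -/
def sat (σ : ℕ → Set P) : ℕ → LTL P → Prop
  | _, tt => True
  | i, atom p => p ∈ σ i
  | i, neg φ => ¬ sat σ i φ
  | i, conj φ ψ => sat σ i φ ∧ sat σ i ψ
  | i, disj φ ψ => sat σ i φ ∨ sat σ i ψ
  | i, next φ => sat σ (i+1) φ
  | i, until_ φ ψ => ∃ j, i ≤ j ∧ sat σ j ψ ∧ ∀ k, i ≤ k → k < j → sat σ k φ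

open Classical in
/-- The LTL progression operator `prog a φ` (a = current letter in 2^Π). -/
noncomputable def prog (a : Set P) : LTL P → LTL P
  | tt => tt
  | atom p => if p ∈ a then tt else ff
  | neg φ => neg (prog a φ)
  | conj φ ψ => conj (prog a φ) (prog a ψ)
  | disj φ ψ => disj (prog a φ) (prog a ψ)
  | next φ => φ
  | until_ φ ψ => disj (prog a ψ) (conj (prog a φ) (until_ φ ψ))

end LTL

/-- Progressed formula along a label sequence. -/
noncomputable def LTL.progTraj {P : Type} (Lab : ℕ → Set P) (φ : LTL P) : ℕ → LTL P
  | 0 => φ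
  | k + 1 => LTL.prog (Lab k) (LTL.progTraj Lab φ k)

/-- Markovian TL-MDP reward R̃ given the label a = L(s). -/
noncomputable def LTL.Rmark {P : Type} [DecidableEq P] (a : Set P) (ψ : LTL P) : ℝ :=
  if LTL.prog a ψ = LTL.tt then 1 else if LTL.prog a ψ = LTL.ff then -1 else 0

/-- Prefix s₀ ... s_t of the deterministic trajectory generated by a
history-dependent policy. -/
def histPref {S A : Type} (f : S → A → S) (π : List S → A) (s0 : S) : ℕ → List S
  | 0 => [s0]
  | t + 1 =>
      let l := histPref f π s0 t
      l ++ [f (l.getLastD s0) (π l)]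

/-- State at time t under a history-dependent policy. -/
def histState {S A : Type} (f : S → A → S) (π : List S → A) (s0 : S) (t : ℕ) : S :=
  (histPref f π s0 t).getLastD s0

/-- Finite-horizon discounted return of a history-dependent policy for the
non-Markovian task reward (reward given when the progressed formula becomes
True/False; episode terminates, i.e. no further reward, once it is True/False). -/
noncomputable def histRet {P S A : Type} [DecidableEq P] (f : S → A → S) (L : S → Set P)
    (φ0 : LTL P) (γ : ℝ) (T : ℕ) (π : List S → A) (s0 : S) : ℝ :=
  ∑ t ∈ Finset.range T,
    let st := histState f π s0 t
    let φt := LTL.progTraj (fun k => L (histState f π s0 k)) φ0 t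
    if φt = LTL.tt ∨ φt = LTL.ff then 0 else γ ^ t * LTL.Rmark (L st) φt

/-- Trajectory of the TL-MDP under a Markovian policy π(a | s, φ). -/
noncomputable def mkTraj {P S A : Type} (f : S → A → S) (L : S → Set P)
    (π : S → LTL P → A) (x0 : S × LTL P) : ℕ → S × LTL P
  | 0 => x0
  | t + 1 =>
      let x := mkTraj f L π x0 t
      (f x.1 (π x.1 x.2), LTL.prog (L x.1) x.2)

/-- Finite-horizon discounted return of a Markovian TL-MDP policy. -/
noncomputable def markRet {P S A : Type} [DecidableEq P] (f : S → A → S) (L : S → Set P)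
    (φ0 : LTL P) (γ : ℝ) (T : ℕ) (π : S → LTL P → A) (s0 : S) : ℝ :=
  ∑ t ∈ Finset.range T,
    let x := mkTraj f L π (s0, φ0) t
    if x.2 = LTL.tt ∨ x.2 = LTL.ff then 0 else γ ^ t * LTL.Rmark (L x.1) x.2

section Aux

open LTL

variable {P S A : Type} [DecidableEq P]

/-- A formula is terminal if it is syntactically `tt` or `ff`. -/
def IsTerm {P : Type} (ψ : LTL P) : Prop := ψ = LTL.tt ∨ ψ = LTL.ff

lemma prog_isTerm {a : Set P} {ψ : LTL P} (h : IsTerm ψ) : LTL.prog a ψ = ψ := by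
  rcases h with h | h <;> subst h <;> rfl

lemma Rmark_of_not_term {a : Set P} {ψ : LTL P} (h : ¬ IsTerm (LTL.prog a ψ)) :
    LTL.Rmark a ψ = 0 := by
  unfold LTL.Rmark
  rw [if_neg fun he => h (Or.inl he), if_neg fun he => h (Or.inr he)]

lemma Rmark_of_tt {a : Set P} {ψ : LTL P} (h : LTL.prog a ψ = LTL.tt) :
    LTL.Rmark a ψ = 1 := by simp [LTL.Rmark, h]

lemma Rmark_of_ff {a : Set P} {ψ : LTL P} (h : LTL.prog a ψ = LTL.ff) :
    LTL.Rmark a ψ = -1 := by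
  unfold LTL.Rmark
  rw [h, if_neg (by simp [LTL.ff]), if_pos rfl]

/-- Generic discounted return of a pair trajectory. -/
noncomputable def pairRet (L : S → Set P) (γ : ℝ) (T : ℕ) (y : ℕ → S × LTL P) : ℝ :=
  ∑ t ∈ Finset.range T,
    if (y t).2 = LTL.tt ∨ (y t).2 = LTL.ff then 0
    else γ ^ t * LTL.Rmark (L (y t).1) (y t).2

lemma histRet_eq (f : S → A → S) (L : S → Set P) (φ0 : LTL P) (γ : ℝ) (T : ℕ)
    (π : List S → A) (s0 : S) :
    histRet f L φ0 γ T π s0 = pairRet L γ T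
      (fun t => (histState f π s0 t,
        LTL.progTraj (fun k => L (histState f π s0 k)) φ0 t)) := rfl

lemma markRet_eq (f : S → A → S) (L : S → Set P) (φ0 : LTL P) (γ : ℝ) (T : ℕ)
    (π : S → LTL P → A) (s0 : S) :
    markRet f L φ0 γ T π s0 = pairRet L γ T (mkTraj f L π (s0, φ0)) := rfl

lemma term_mono {L : S → Set P} {y : ℕ → S × LTL P}
    (hy : ∀ t, (y (t+1)).2 = LTL.prog (L (y t).1) (y t).2)
    {t t' : ℕ} (h : t ≤ t') (ht : IsTerm (y t).2) : IsTerm (y t').2 := by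
  induction t', h using Nat.le_induction with
  | base => exact ht
  | succ n hn ih => rw [hy n, prog_isTerm ih]; exact ih

lemma pairRet_eq_zero {L : S → Set P} {γ : ℝ} {T : ℕ} {y : ℕ → S × LTL P}
    (hy : ∀ t, (y (t+1)).2 = LTL.prog (L (y t).1) (y t).2)
    (h : ∀ t < T, IsTerm (y t).2 ∨ ¬ IsTerm (y (t+1)).2) :
    pairRet L γ T y = 0 := by
  unfold pairRet
  refine Finset.sum_eq_zero fun t ht => ?_
  rcases h t (Finset.mem_range.mp ht) with h' | h'
  · rw [if_pos (show (y t).2 = LTL.tt ∨ (y t).2 = LTL.ff from h')]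
  · split
    · rfl
    · rw [Rmark_of_not_term (fun hh => h' ((hy t) ▸ hh)), mul_zero]

lemma pairRet_eq_cross {L : S → Set P} {γ : ℝ} {T : ℕ} {y : ℕ → S × LTL P}
    (hy : ∀ t, (y (t+1)).2 = LTL.prog (L (y t).1) (y t).2)
    {t0 : ℕ} (h0 : t0 < T) (h1 : ¬ IsTerm (y t0).2) (h2 : IsTerm (y (t0+1)).2) :
    pairRet L γ T y = γ ^ t0 * LTL.Rmark (L (y t0).1) (y t0).2 := by
  unfold pairRet
  rw [Finset.sum_eq_single t0]
  · rw [if_neg (show ¬((y t0).2 = LTL.tt ∨ (y t0).2 = LTL.ff) from h1)]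
  · intro t ht hne
    rcases lt_or_gt_of_ne hne with hlt | hgt
    · have ha : ¬ IsTerm (y t).2 := fun h => h1 (term_mono hy hlt.le h)
      have hb : ¬ IsTerm (y (t+1)).2 := fun h => h1 (term_mono hy (by omega) h)
      rw [if_neg (show ¬((y t).2 = LTL.tt ∨ (y t).2 = LTL.ff) from ha),
        Rmark_of_not_term (fun hh => hb ((hy t) ▸ hh)), mul_zero]
    · rw [if_pos (show (y t).2 = LTL.tt ∨ (y t).2 = LTL.ff from term_mono hy hgt h2)]
  · intro h; exact absurd (Finset.mem_range.mpr h0) h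

lemma pairRet_le {L : S → Set P} {γ : ℝ} (h0 : 0 < γ) (h1 : γ ≤ 1)
    (T : ℕ) (y : ℕ → S × LTL P) : pairRet L γ T y ≤ T := by
  unfold pairRet
  calc ∑ t ∈ Finset.range T, (if (y t).2 = LTL.tt ∨ (y t).2 = LTL.ff then 0
        else γ ^ t * LTL.Rmark (L (y t).1) (y t).2)
      ≤ ∑ t ∈ Finset.range T, (1:ℝ) := by
        refine Finset.sum_le_sum fun t _ => ?_
        split
        · norm_num
        · have hR : LTL.Rmark (L (y t).1) (y t).2 ≤ 1 := by
            unfold LTL.Rmark; split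
            · exact le_refl 1
            · split <;> norm_num
          calc γ ^ t * LTL.Rmark (L (y t).1) (y t).2 ≤ γ ^ t * 1 :=
                mul_le_mul_of_nonneg_left hR (pow_nonneg h0.le t)
            _ ≤ 1 := by rw [mul_one]; exact pow_le_one₀ h0.le h1
    _ = T := by simp

end Aux

section Aux2

set_option linter.unusedSectionVars false

variable {P S A : Type} [DecidableEq P]

lemma histState_zero (f : S → A → S) (π : List S → A) (s0 : S) :
    histState f π s0 0 = s0 := rfl

lemma histState_succ (f : S → A → S) (π : List S → A) (s0 : S) (t : ℕ) :
    histState f π s0 (t+1) = f (histState f π s0 t) (π (histPref f π s0 t)) := by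
  show ((histPref f π s0 t) ++ [_]).getLastD s0 = _
  rw [List.getLastD_concat]
  rfl

open Classical in
/-- First-visit Markovian policy imitating a trajectory `x` with actions `a`. -/
noncomputable def fvPol [Nonempty A] (x : ℕ → S × LTL P) (a : ℕ → A) : S → LTL P → A :=
  fun s ψ => if h : ∃ u, x u = (s, ψ) then a (Nat.find h) else Classical.arbitrary A

open Classical in
/-- Last-visit-before-`τ` Markovian policy imitating a trajectory `x`. -/
noncomputable def lvPol [Nonempty A] (x : ℕ → S × LTL P) (a : ℕ → A) (τ : ℕ) :
    S → LTL P → A :=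
  fun s ψ => if h : ∃ u, u ≤ τ ∧ x u = (s, ψ) then
    a (Nat.findGreatest (fun u => x u = (s, ψ)) τ) else Classical.arbitrary A

open Classical in
lemma fv_step [Nonempty A] (f : S → A → S) (L : S → Set P)
    (x : ℕ → S × LTL P) (a : ℕ → A)
    (hx : ∀ t, x (t+1) = (f (x t).1 (a t), LTL.prog (L (x t).1) (x t).2))
    {t j : ℕ} (hj : x j = mkTraj f L (fvPol x a) (x 0) t) :
    ∃ j', j' ≤ j ∧ x j' = mkTraj f L (fvPol x a) (x 0) t ∧
      mkTraj f L (fvPol x a) (x 0) (t+1) = x (j'+1) := by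
  set y := mkTraj f L (fvPol x a) (x 0) with hydef
  have h : ∃ u, x u = y t := ⟨j, hj⟩
  refine ⟨Nat.find h, Nat.find_le hj, Nat.find_spec h, ?_⟩
  have hev : fvPol x a (y t).1 (y t).2 = a (Nat.find h) := dif_pos h
  have hrec : y (t+1) = (f (y t).1 (fvPol x a (y t).1 (y t).2),
      LTL.prog (L (y t).1) (y t).2) := rfl
  rw [hrec, hev, hx (Nat.find h), Nat.find_spec h]

open Classical in
lemma lv_step [Nonempty A] (f : S → A → S) (L : S → Set P)
    (x : ℕ → S × LTL P) (a : ℕ → A) (τ : ℕ)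
    (hx : ∀ t, x (t+1) = (f (x t).1 (a t), LTL.prog (L (x t).1) (x t).2))
    {t j : ℕ} (hj : x j = mkTraj f L (lvPol x a τ) (x 0) t) (hjτ : j ≤ τ) :
    ∃ g, j ≤ g ∧ g ≤ τ ∧ x g = mkTraj f L (lvPol x a τ) (x 0) t ∧
      mkTraj f L (lvPol x a τ) (x 0) (t+1) = x (g+1) := by
  set y := mkTraj f L (lvPol x a τ) (x 0) with hydef
  have hex : ∃ u, u ≤ τ ∧ x u = y t := ⟨j, hjτ, hj⟩
  set g := Nat.findGreatest (fun u => x u = y t) τ with hgdef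
  have hspec : x g = y t := Nat.findGreatest_spec (P := fun u => x u = y t) hjτ hj
  refine ⟨g, Nat.le_findGreatest (P := fun u => x u = y t) hjτ hj, Nat.findGreatest_le τ, hspec, ?_⟩
  have hev : lvPol x a τ (y t).1 (y t).2 = a g := dif_pos hex
  have hrec : y (t+1) = (f (y t).1 (lvPol x a τ (y t).1 (y t).2),
      LTL.prog (L (y t).1) (y t).2) := rfl
  rw [hrec, hev, hx g, hspec]

end Aux2

section Aux3

set_option linter.unusedSectionVars false
set_option maxHeartbeats 1000000

variable {P S A : Type} [DecidableEq P] [Nonempty A]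

lemma exists_mark_ge (f : S → A → S) (L : S → Set P) {γ : ℝ}
    (hγ0 : 0 < γ) (hγ1 : γ ≤ 1) (T : ℕ) (x : ℕ → S × LTL P) (a : ℕ → A)
    (hx : ∀ t, x (t+1) = (f (x t).1 (a t), LTL.prog (L (x t).1) (x t).2)) :
    ∃ π : S → LTL P → A, pairRet L γ T x ≤ pairRet L γ T (mkTraj f L π (x 0)) := by
  classical
  have hxs : ∀ t, (x (t+1)).2 = LTL.prog (L (x t).1) (x t).2 := by
    intro t; rw [hx t]
  by_cases hc : ∃ t, t < T ∧ ¬ IsTerm (x t).2 ∧ IsTerm (x (t+1)).2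
  · -- there is a crossing; take the first one
    set τ := Nat.find hc with hτdef
    obtain ⟨hτT, hτ1, hτ2⟩ : τ < T ∧ ¬ IsTerm (x τ).2 ∧ IsTerm (x (τ+1)).2 :=
      Nat.find_spec hc
    -- everything up to τ is nonterminal
    have hall : ∀ u, u ≤ τ → ¬ IsTerm (x u).2 := by
      intro u hu
      induction u with
      | zero => exact fun h => hτ1 (term_mono hxs (Nat.zero_le τ) h)
      | succ n ih =>
        intro h
        have hn : ¬ IsTerm (x n).2 := ih (by omega)
        exact Nat.find_min hc (m := n) (by omega) ⟨by omega, hn, h⟩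
    -- crossings only happen at τ
    have huniq : ∀ g, ¬ IsTerm (x g).2 → IsTerm (x (g+1)).2 → g = τ := by
      intro g hg1 hg2
      rcases lt_trichotomy g τ with h | h | h
      · exact absurd hg2 (hall (g+1) (by omega))
      · exact h
      · exact absurd (term_mono hxs (by omega : τ + 1 ≤ g) hτ2) hg1
    have hxret : pairRet L γ T x = γ ^ τ * LTL.Rmark (L (x τ).1) (x τ).2 :=
      pairRet_eq_cross hxs hτT hτ1 hτ2
    have hRτ : LTL.prog (L (x τ).1) (x τ).2 = (x (τ+1)).2 := (hxs τ).symm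
    rcases hτ2 with htt | hff
    · -- success: use the last-visit policy
      refine ⟨lvPol x a τ, ?_⟩
      set y := mkTraj f L (lvPol x a τ) (x 0) with hydef
      have hy : ∀ t, (y (t+1)).2 = LTL.prog (L (y t).1) (y t).2 := fun t => rfl
      have claim : ∀ t, IsTerm (y t).2 ∨ ∃ j, t ≤ j ∧ j ≤ τ ∧ x j = y t := by
        intro t
        induction t with
        | zero => exact Or.inr ⟨0, le_refl 0, Nat.zero_le τ, rfl⟩
        | succ n ih =>
          rcases ih with h | ⟨j, hnj, hjτ, hj⟩
          · left; rw [hy n, prog_isTerm h]; exact h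
          · obtain ⟨g, hjg, hgτ, hg, hstep⟩ := lv_step f L x a τ hx hj hjτ
            rw [← hydef] at hg hstep
            rcases Nat.lt_or_ge g τ with hlt | hge
            · exact Or.inr ⟨g+1, by omega, by omega, hstep.symm⟩
            · have hgeq : g = τ := le_antisymm hgτ hge
              left
              rw [hstep, hgeq]
              exact Or.inl htt
      -- y reaches a terminal formula by time τ+1
      have hterm : ∃ n, IsTerm (y n).2 := by
        rcases claim (τ+1) with h | ⟨j, hj1, hj2, _⟩
        · exact ⟨τ+1, h⟩
        · omega
      set n := Nat.find hterm with hndef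
      have hnτ : n ≤ τ + 1 := by
        rcases claim (τ+1) with h | ⟨j, hj1, hj2, _⟩
        · exact Nat.find_le h
        · omega
      have hn0 : n ≠ 0 := by
        intro h0
        have h := Nat.find_spec hterm
        rw [← hndef, h0] at h
        exact hall 0 (Nat.zero_le τ) h
      obtain ⟨m, hm⟩ : ∃ m, n = m + 1 := ⟨n - 1, by omega⟩
      have hym1 : IsTerm (y (m+1)).2 := by
        have h := Nat.find_spec hterm
        rw [← hndef, hm] at h
        exact h
      have hym : ¬ IsTerm (y m).2 := Nat.find_min hterm (by omega)
      have hmτ : m ≤ τ := by omega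
      -- identify the crossing of y with the crossing of x
      rcases claim m with h | ⟨j, hmj, hjτ, hj⟩
      · exact absurd h hym
      obtain ⟨g, hjg, hgτ, hg, hstep⟩ := lv_step f L x a τ hx hj hjτ
      rw [← hydef] at hg hstep
      have hgterm : IsTerm (x (g+1)).2 := by rw [← hstep]; exact hym1
      have hgnt : ¬ IsTerm (x g).2 := by rw [hg]; exact hym
      have hgτ' : g = τ := huniq g hgnt hgterm
      have hyret : pairRet L γ T y = γ ^ m * LTL.Rmark (L (y m).1) (y m).2 :=
        pairRet_eq_cross hy (by omega) hym hym1
      have hprogy : LTL.prog (L (y m).1) (y m).2 = LTL.tt := by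
        rw [← hy m, hstep, hgτ', htt]
      rw [hxret, hyret, Rmark_of_tt (hRτ.trans htt), Rmark_of_tt hprogy, mul_one, mul_one]
      exact pow_le_pow_of_le_one hγ0.le hγ1 hmτ
    · -- failure: use the first-visit policy
      refine ⟨fvPol x a, ?_⟩
      set y := mkTraj f L (fvPol x a) (x 0) with hydef
      have hy : ∀ t, (y (t+1)).2 = LTL.prog (L (y t).1) (y t).2 := fun t => rfl
      have occ : ∀ t, ∃ j, j ≤ t ∧ x j = y t := by
        intro t
        induction t with
        | zero => exact ⟨0, le_refl 0, rfl⟩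
        | succ n ih =>
          obtain ⟨j, hjn, hj⟩ := ih
          obtain ⟨j', hj'j, _, hstep⟩ := fv_step f L x a hx hj
          exact ⟨j' + 1, by omega, hstep.symm⟩
      rw [hxret, Rmark_of_ff (hRτ.trans hff)]
      by_cases hcy : ∃ t', t' < T ∧ ¬ IsTerm (y t').2 ∧ IsTerm (y (t'+1)).2
      · obtain ⟨t', ht'T, hy1, hy2⟩ := hcy
        obtain ⟨j, hjt, hj⟩ := occ t'
        obtain ⟨j', hj'j, hj'eq, hstep⟩ := fv_step f L x a hx hj
        rw [← hydef] at hj'eq hstep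
        have hj'nt : ¬ IsTerm (x j').2 := by rw [hj'eq]; exact hy1
        have hj't : IsTerm (x (j'+1)).2 := by rw [← hstep]; exact hy2
        have hj'τ : j' = τ := huniq j' hj'nt hj't
        have hyret : pairRet L γ T y = γ ^ t' * LTL.Rmark (L (y t').1) (y t').2 :=
          pairRet_eq_cross hy ht'T hy1 hy2
        have hprogy : LTL.prog (L (y t').1) (y t').2 = LTL.ff := by
          rw [← hy t', hstep, hj'τ, hff]
        rw [hyret, Rmark_of_ff hprogy]
        have hτt' : τ ≤ t' := by omega
        have := pow_le_pow_of_le_one hγ0.le hγ1 hτt'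
        nlinarith [pow_pos hγ0 τ, pow_pos hγ0 t']
      · push_neg at hcy
        have hyret : pairRet L γ T y = 0 := by
          refine pairRet_eq_zero hy fun t ht => ?_
          by_contra hcon
          push_neg at hcon
          exact absurd (hcy t ht hcon.1) (not_not.mpr hcon.2)
        rw [hyret]
        nlinarith [pow_pos hγ0 τ]
  · -- no crossing at all: both returns are zero
    push_neg at hc
    refine ⟨fvPol x a, ?_⟩
    set y := mkTraj f L (fvPol x a) (x 0) with hydef
    have hy : ∀ t, (y (t+1)).2 = LTL.prog (L (y t).1) (y t).2 := fun t => rfl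
    have hxret : pairRet L γ T x = 0 := by
      refine pairRet_eq_zero hxs fun t ht => ?_
      by_contra hcon
      push_neg at hcon
      exact absurd (hc t ht hcon.1) (not_not.mpr hcon.2)
    have hyret : pairRet L γ T y = 0 := by
      refine pairRet_eq_zero hy fun t ht => ?_
      by_contra hcon
      push_neg at hcon
      obtain ⟨hnt, htm⟩ := hcon
      obtain ⟨j, hjt, hj⟩ :
          ∃ j, j ≤ t ∧ x j = y t := by
        clear hnt htm
        induction t with
        | zero => exact ⟨0, le_refl 0, rfl⟩
        | succ n ih =>
          obtain ⟨j, hjn, hj⟩ := ih (by omega)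
          obtain ⟨j', hj'j, _, hstep⟩ := fv_step f L x a hx hj
          exact ⟨j' + 1, by omega, hstep.symm⟩
      obtain ⟨j', hj'j, hj'eq, hstep⟩ := fv_step f L x a hx hj
      have hj'nt : ¬ IsTerm (x j').2 := by rw [hj'eq]; exact hnt
      have hj't : IsTerm (x (j'+1)).2 := by rw [← hstep]; exact htm
      exact absurd (hc j' (by omega) hj'nt) (not_not.mpr hj't)
    rw [hxret, hyret]

end Aux3

section Aux4

set_option linter.unusedSectionVars false
set_option maxHeartbeats 1000000

variable {P S A : Type} [DecidableEq P] [Nonempty A]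

/-- Lift a Markovian TL-MDP policy to a history-dependent policy. -/
noncomputable def liftPol (f : S → A → S) (L : S → Set P) (φ0 : LTL P) (s0 : S)
    (π : S → LTL P → A) : List S → A :=
  fun l => π (l.getLastD s0) (l.dropLast.foldl (fun ψ s => LTL.prog (L s) ψ) φ0)

lemma lift_eq (f : S → A → S) (L : S → Set P) (φ0 : LTL P) (γ : ℝ) (T : ℕ)
    (π : S → LTL P → A) (s0 : S) :
    histRet f L φ0 γ T (liftPol f L φ0 s0 π) s0 = markRet f L φ0 γ T π s0 := by
  set πh := liftPol f L φ0 s0 π with hπh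
  set Y := mkTraj f L π (s0, φ0) with hY
  have key : ∀ t, (histPref f πh s0 t).getLastD s0 = (Y t).1 ∧
      (histPref f πh s0 t).dropLast.foldl (fun ψ s => LTL.prog (L s) ψ) φ0 = (Y t).2 ∧
      (histPref f πh s0 t).foldl (fun ψ s => LTL.prog (L s) ψ) φ0 = (Y (t+1)).2 := by
    intro t
    induction t with
    | zero => exact ⟨rfl, rfl, rfl⟩
    | succ t ih =>
      obtain ⟨ih1, ih2, ih3⟩ := ih
      have hact : πh (histPref f πh s0 t) = π (Y t).1 (Y t).2 := by
        show π ((histPref f πh s0 t).getLastD s0)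
            ((histPref f πh s0 t).dropLast.foldl (fun ψ s => LTL.prog (L s) ψ) φ0) = _
        rw [ih1, ih2]
      have hpref : histPref f πh s0 (t+1) = histPref f πh s0 t ++
          [f ((histPref f πh s0 t).getLastD s0) (πh (histPref f πh s0 t))] := rfl
      have h1 : (histPref f πh s0 (t+1)).getLastD s0 = (Y (t+1)).1 := by
        rw [hpref, List.getLastD_concat, ih1, hact]
        rfl
      refine ⟨h1, ?_, ?_⟩
      · rw [hpref, List.dropLast_concat, ih3]
      · rw [hpref, List.foldl_append]
        show LTL.prog (L (f ((histPref f πh s0 t).getLastD s0) (πh (histPref f πh s0 t))))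
            ((histPref f πh s0 t).foldl (fun ψ s => LTL.prog (L s) ψ) φ0) = _
        rw [ih3, ih1, hact]
        rfl
  have hstate : ∀ t, histState f πh s0 t = (Y t).1 := fun t => (key t).1
  have hprog : ∀ t, LTL.progTraj (fun k => L (histState f πh s0 k)) φ0 t = (Y t).2 := by
    intro t
    induction t with
    | zero => rfl
    | succ t ih =>
      show LTL.prog (L (histState f πh s0 t))
          (LTL.progTraj (fun k => L (histState f πh s0 k)) φ0 t) = (Y (t+1)).2
      rw [hstate t, ih]
      rfl
  rw [histRet_eq, markRet_eq, ← hY]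
  unfold pairRet
  refine Finset.sum_congr rfl fun t _ => ?_
  simp only [hstate t, hprog t]

end Aux4


/-- in a deterministic labeled MDP, the optimal expected discounted
return over history-dependent policies for the non-Markovian task reward equals the
optimal return over Markovian policies on the TL-MDP. -/
theorem tlmdp_markov_policies_suffice {P S A : Type} [DecidableEq P] [Nonempty A]
    (f : S → A → S) (L : S → Set P) (φ0 : LTL P) (γ : ℝ) (hγ : γ ∈ Set.Ioc (0 : ℝ) 1)
    (T : ℕ) (s0 : S) :
    (⨆ π : List S → A, histRet f L φ0 γ T π s0)
      = ⨆ π : S → LTL P → A, markRet f L φ0 γ T π s0 := by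
  obtain ⟨hγ0, hγ1⟩ := hγ
  have bddM : BddAbove (Set.range fun π : S → LTL P → A => markRet f L φ0 γ T π s0) := by
    refine ⟨T, ?_⟩
    rintro r ⟨π, rfl⟩
    dsimp only
    rw [markRet_eq]
    exact pairRet_le hγ0 hγ1 T _
  have bddH : BddAbove (Set.range fun π : List S → A => histRet f L φ0 γ T π s0) := by
    refine ⟨T, ?_⟩
    rintro r ⟨π, rfl⟩
    dsimp only
    rw [histRet_eq]
    exact pairRet_le hγ0 hγ1 T _
  refine le_antisymm ?_ ?_
  · refine ciSup_le fun πh => ?_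
    set x : ℕ → S × LTL P := fun t => (histState f πh s0 t,
      LTL.progTraj (fun k => L (histState f πh s0 k)) φ0 t) with hxdef
    have hx : ∀ t, x (t+1) = (f (x t).1 (πh (histPref f πh s0 t)),
        LTL.prog (L (x t).1) (x t).2) := by
      intro t
      refine Prod.ext ?_ rfl
      exact histState_succ f πh s0 t
    obtain ⟨πm, hle⟩ := exists_mark_ge f L hγ0 hγ1 T x
      (fun t => πh (histPref f πh s0 t)) hx
    have hx0 : x 0 = (s0, φ0) := rfl
    calc histRet f L φ0 γ T πh s0 = pairRet L γ T x := histRet_eq f L φ0 γ T πh s0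
      _ ≤ pairRet L γ T (mkTraj f L πm (x 0)) := hle
      _ = markRet f L φ0 γ T πm s0 := by rw [hx0, ← markRet_eq]
      _ ≤ _ := le_ciSup bddM πm
  · refine ciSup_le fun πm => ?_
    exact le_ciSup_of_le bddH (liftPol f L φ0 s0 πm) (lift_eq f L φ0 γ T πm s0).ge
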